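/- arXiv:1011.4438 — 4 statements merged into one kernel-verified Lean document; each statement's English description precedes it below -/
import Mathlib

section
/- Let a, b be odd positive integers and α ∈ {a,b}. If w is a palindrome of odd length over {a,b}, then Δ_α^{-1}(w) = α^{w₁} ᾱ^{w₂} α^{w₃} ⋯ is also a palindrome of odd length. -/
/-- The other letter of the two-letter alphabet `{a, b}`. -/
def bar (a b α : ℕ) : ℕ := if α = a then b else a

/-- The pseudo-inverse Δ_α⁻¹ over `{a, b}`: the word `α^{w₁} ᾱ^{w₂} α^{w₃} ⋯`
with alternating bases starting at `α` and exponents the letters of `w`. -/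
def pinv2 (a b : ℕ) : ℕ → List ℕ → List ℕ
  | _, [] => []
  | α, x :: xs => List.replicate x α ++ pinv2 a b (bar a b α) xs

lemma bar_mem (a b α : ℕ) : bar a b α = a ∨ bar a b α = b := by
  unfold bar; split <;> simp

lemma bar_bar (a b α : ℕ) (hab : a ≠ b) (hα : α = a ∨ α = b) :
    bar a b (bar a b α) = α := by
  rcases hα with h | h <;> subst h <;> simp [bar, hab, Ne.symm hab]

lemma pinv2_snoc (a b : ℕ) (hab : a ≠ b) (x : ℕ) :
    ∀ (u : List ℕ) (γ : ℕ), γ = a ∨ γ = b →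
    pinv2 a b γ (u ++ [x]) =
      pinv2 a b γ u ++ List.replicate x (if Even u.length then γ else bar a b γ)
  | [], γ, _ => by simp [pinv2]
  | y :: u, γ, hγ => by
    have IH := pinv2_snoc a b hab x u (bar a b γ) (bar_mem a b γ)
    have hB : (if Even u.length then bar a b γ else bar a b (bar a b γ)) =
        (if Even (y :: u).length then γ else bar a b γ) := by
      simp only [List.length_cons, Nat.even_add_one]
      by_cases h : Even u.length <;> simp [h, bar_bar a b γ hab hγ]
    simp only [List.cons_append, pinv2, List.append_eq, IH, hB, List.append_assoc]

lemma pinv2_reverse (a b : ℕ) (hab : a ≠ b) :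
    ∀ (w : List ℕ) (α : ℕ), α = a ∨ α = b →
    (pinv2 a b α w).reverse =
      pinv2 a b (if Odd w.length then α else bar a b α) w.reverse
  | [], α, _ => by simp [pinv2]
  | x :: xs, α, hα => by
    have IH := pinv2_reverse a b hab xs (bar a b α) (bar_mem a b α)
    have hB : (if Odd (x :: xs).length then α else bar a b α) = a ∨
        (if Odd (x :: xs).length then α else bar a b α) = b := by
      split
      · exact hα
      · exact bar_mem a b α
    rw [List.reverse_cons,
      pinv2_snoc a b hab x xs.reverse _ hB]
    simp only [pinv2, List.reverse_append, List.reverse_replicate, IH,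
      List.length_reverse, List.length_cons]
    by_cases h : Odd xs.length
    · simp [h, Nat.odd_add_one, Nat.not_even_iff_odd.2 h, bar_bar a b α hab hα]
    · simp [h, Nat.odd_add_one, Nat.not_odd_iff_even.1 h, bar_bar a b α hab hα]

lemma pinv2_length (a b : ℕ) :
    ∀ (w : List ℕ) (α : ℕ), (pinv2 a b α w).length = w.sum
  | [], _ => rfl
  | x :: xs, α => by
    simp [pinv2, pinv2_length a b xs (bar a b α)]

/-- Over a two-letter odd alphabet `{a, b}`, if `w` is a palindrome of odd
length, then Δ_α⁻¹(w) is also a palindrome of odd length. -/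
theorem stmt6 (a b : ℕ) (ha : Odd a) (hb : Odd b) (hab : a ≠ b)
    (α : ℕ) (hα : α = a ∨ α = b)
    (w : List ℕ) (hw : ∀ x ∈ w, x = a ∨ x = b)
    (hpal : w.reverse = w) (hlen : Odd w.length) :
    (pinv2 a b α w).reverse = pinv2 a b α w ∧ Odd (pinv2 a b α w).length := by
  constructor
  · rw [pinv2_reverse a b hab w α hα, hpal, if_pos hlen]
  · rw [pinv2_length]
    have key : ∀ u : List ℕ, (∀ x ∈ u, Odd x) → u.sum % 2 = u.length % 2 := by
      intro u hu
      induction u with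
      | nil => rfl
      | cons x xs ih =>
        have hx : x % 2 = 1 := Nat.odd_iff.1 (hu x (by simp))
        have h2 := ih (fun y hy => hu y (by simp [hy]))
        simp only [List.sum_cons, List.length_cons]
        omega
    have hodd : ∀ x ∈ w, Odd x := by
      intro x hx; rcases hw x hx with h | h <;> simp [h, ha, hb]
    rw [Nat.odd_iff, key w hodd, ← Nat.odd_iff]
    exact hlen
end

section
/- Over the two-letter alphabet Σ₂ = {a, b} of positive integers, the run-length operator Δ on infinite words has exactly two fixed points: the generalized Kolakoski words K_{a,b} and K_{b,a}, i.e. the unique infinite words starting with a (respectively b), with run bases alternating between a and b, that equal their own sequence of run lengths. -/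
/-- Partial sums of a sequence of run lengths. -/
def partialSum (t : ℕ → ℕ) : ℕ → ℕ
  | 0 => 0
  | k + 1 => partialSum t k + t k

/-- `w` decomposes into maximal runs with base sequence `α` and run-length
sequence `t`. -/
def IsRunDecomp (w α t : ℕ → ℕ) : Prop :=
  (∀ k, 1 ≤ t k) ∧ (∀ k, α k ≠ α (k + 1)) ∧
    ∀ k i, partialSum t k ≤ i → i < partialSum t (k + 1) → w i = α k

/-- `t` is the run-length sequence Δ(w) of the infinite word `w`. -/
def IsDelta (w t : ℕ → ℕ) : Prop := ∃ α, IsRunDecomp w α t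

/- ## Auxiliary material -/

lemma partialSum_mono (t : ℕ → ℕ) : Monotone (partialSum t) :=
  monotone_nat_of_le_succ fun n => Nat.le_add_right _ _

lemma self_le_partialSum {t : ℕ → ℕ} (ht : ∀ k, 1 ≤ t k) : ∀ k, k ≤ partialSum t k := by
  intro k
  induction k with
  | zero => simp [partialSum]
  | succ n ih => have := ht n; simp only [partialSum]; omega

/-- index of the run containing position `l.length`, given the prefix `l`. -/
def nextIdx (l : List ℕ) : ℕ :=
  Nat.findGreatest (fun k => (l.take k).sum ≤ l.length) l.length

/-- prefixes of the generalized Kolakoski word with run-base sequence `α`. -/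
def pref (α : ℕ → ℕ) : ℕ → List ℕ
  | 0 => []
  | n + 1 => pref α n ++ [α (nextIdx (pref α n))]

/-- the generalized Kolakoski word with run-base sequence `α`. -/
def kw (α : ℕ → ℕ) (i : ℕ) : ℕ := (pref α (i + 1)).getD i 0

lemma pref_length (α : ℕ → ℕ) (n : ℕ) : (pref α n).length = n := by
  induction n with
  | zero => rfl
  | succ n ih => simp [pref, ih]

lemma concat_getD (l : List ℕ) (x : ℕ) : (l ++ [x]).getD l.length 0 = x := by
  simp [List.getD_eq_getElem?_getD, List.getElem?_concat_length]

lemma kw_def (α : ℕ → ℕ) (i : ℕ) : kw α i = α (nextIdx (pref α i)) := by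
  unfold kw
  rw [show pref α (i + 1) = pref α i ++ [α (nextIdx (pref α i))] from rfl]
  have := concat_getD (pref α i) (α (nextIdx (pref α i)))
  rwa [pref_length] at this

lemma pref_take (α : ℕ → ℕ) {n m : ℕ} (h : n ≤ m) : (pref α m).take n = pref α n := by
  induction m with
  | zero => interval_cases n; rfl
  | succ m ih =>
    rcases Nat.lt_or_ge n (m + 1) with hn | hn
    · rw [pref, List.take_append_of_le_length (by rw [pref_length]; omega), ih (by omega)]
    · have : n = m + 1 := by omega
      subst this
      exact List.take_of_length_le (by rw [pref_length])

lemma sum_pref (α : ℕ → ℕ) (k : ℕ) : (pref α k).sum = partialSum (kw α) k := by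
  induction k with
  | zero => rfl
  | succ n ih => simp [pref, partialSum, ih, kw_def]

lemma kw_pos {α : ℕ → ℕ} (hα : ∀ k, 1 ≤ α k) (i : ℕ) : 1 ≤ kw α i := by
  rw [kw_def]; exact hα _

lemma kw_run {α : ℕ → ℕ} (hα : ∀ k, 1 ≤ α k) (k i : ℕ)
    (h1 : partialSum (kw α) k ≤ i) (h2 : i < partialSum (kw α) (k + 1)) :
    kw α i = α k := by
  rw [kw_def]
  congr 1
  have hki : k ≤ i := le_trans (self_le_partialSum (kw_pos hα) k) h1
  unfold nextIdx
  rw [pref_length]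
  rw [Nat.findGreatest_eq_iff]
  refine ⟨hki, fun _ => ?_, fun j hj hji hQ => ?_⟩
  · rw [pref_take α hki, sum_pref]
    exact h1
  · rw [pref_take α hji, sum_pref] at hQ
    have : partialSum (kw α) (k + 1) ≤ partialSum (kw α) j := partialSum_mono (kw α) hj
    omega

lemma kw_decomp {α : ℕ → ℕ} (hα : ∀ k, 1 ≤ α k) (halt : ∀ k, α k ≠ α (k + 1)) :
    IsRunDecomp (kw α) α (kw α) :=
  ⟨kw_pos hα, halt, kw_run hα⟩

lemma run_exists {w α : ℕ → ℕ} (h : IsRunDecomp w α w) (i : ℕ) :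
    ∃ k, k ≤ i ∧ partialSum w k ≤ i ∧ i < partialSum w (k + 1) := by
  set k := Nat.findGreatest (fun k => partialSum w k ≤ i) i with hk
  have hk0 : partialSum w 0 ≤ i := by simp [partialSum]
  have hspec : partialSum w k ≤ i :=
    Nat.findGreatest_spec (P := fun k => partialSum w k ≤ i) (Nat.zero_le i) hk0
  have hki : k ≤ i := Nat.findGreatest_le i
  refine ⟨k, hki, hspec, ?_⟩
  by_contra hc
  push_neg at hc
  have hk1i : k + 1 ≤ i := le_trans (self_le_partialSum h.1 (k + 1)) hc
  have := Nat.le_findGreatest (P := fun k => partialSum w k ≤ i) hk1i hc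
  omega

lemma decomp_unique {w w' α : ℕ → ℕ} (h : IsRunDecomp w α w) (h' : IsRunDecomp w' α w') :
    w = w' := by
  have key : ∀ i, w i = w' i := by
    intro i
    induction i using Nat.strong_induction_on with
    | _ i IH =>
      have hsum : ∀ k, k ≤ i → partialSum w k = partialSum w' k := by
        intro k hk
        induction k with
        | zero => rfl
        | succ n ih =>
          simp only [partialSum, ih (by omega), IH n (by omega)]
      obtain ⟨k, hki, h1, h2⟩ := run_exists h i
      have hw : w i = α k := h.2.2 k i h1 h2
      have h1' : partialSum w' k ≤ i := (hsum k hki) ▸ h1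
      have h2' : i < partialSum w' (k + 1) := by
        rcases lt_or_eq_of_le hki with hlt | heq
        · have heq2 : partialSum w' (k + 1) = partialSum w (k + 1) := by
            simp only [partialSum, hsum k hki, IH k hlt]
          omega
        · rw [heq]
          exact lt_of_lt_of_le (Nat.lt_succ_self i) (self_le_partialSum h'.1 (i + 1))
      rw [hw, ← h'.2.2 k i h1' h2']
  funext i
  exact key i

lemma first_letter {w α : ℕ → ℕ} (h : IsRunDecomp w α w) : w 0 = α 0 := by
  refine h.2.2 0 0 (le_refl _) ?_
  have := h.1 0
  simp only [partialSum]
  omega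

lemma alpha_val {w α : ℕ → ℕ} (h : IsRunDecomp w α w) (k : ℕ) :
    α k = w (partialSum w k) := by
  refine (h.2.2 k _ (le_refl _) ?_).symm
  have := h.1 k
  simp only [partialSum]
  omega

lemma alt_form {a b : ℕ} (hab : a ≠ b) {α : ℕ → ℕ}
    (hmem : ∀ k, α k = a ∨ α k = b) (halt : ∀ k, α k ≠ α (k + 1)) :
    (∀ k, α k = if k % 2 = 0 then a else b) ∨ (∀ k, α k = if k % 2 = 0 then b else a) := by
  have step : ∀ x y n, α n = (if n % 2 = 0 then x else y) → x ≠ y →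
      (α (n+1) = a ∨ α (n+1) = b) → ({x, y} : Set ℕ) = {a, b} →
      α (n + 1) = if (n + 1) % 2 = 0 then x else y := by
    intro x y n hn hxy hm hset
    have hne := halt n
    rw [hn] at hne
    have hxy' : α (n + 1) = x ∨ α (n + 1) = y := by
      have : α (n + 1) ∈ ({a, b} : Set ℕ) := by rcases hm with h | h <;> simp [h]
      rw [← hset] at this
      simpa using this
    rcases Nat.mod_two_eq_zero_or_one n with hp | hp
    · rw [if_pos hp] at hne
      rw [if_neg (by omega : ¬ (n + 1) % 2 = 0)]
      rcases hxy' with h | h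
      · exact absurd h.symm hne
      · exact h
    · rw [if_neg (by omega : ¬ n % 2 = 0)] at hne
      rw [if_pos (by omega : (n + 1) % 2 = 0)]
      rcases hxy' with h | h
      · exact h
      · exact absurd h.symm hne
  rcases hmem 0 with h0 | h0
  · left
    intro k
    induction k with
    | zero => simpa using h0
    | succ n ih =>
      exact step a b n ih hab (hmem (n+1)) rfl
  · right
    intro k
    induction k with
    | zero => simpa using h0
    | succ n ih =>
      exact step b a n ih (Ne.symm hab) (hmem (n+1)) (by ext x; simp; tauto)

/-- Over `Σ₂ = {a, b}`, the operator Δ on infinite words has exactly two fixed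
points: the generalized Kolakoski words `K_{a,b}` and `K_{b,a}`, i.e. the
unique infinite words whose run bases alternate starting with `a`
(respectively `b`) and which equal their own run-length sequence. -/
theorem stmt8 (a b : ℕ) (ha : 0 < a) (hb : 0 < b) (hab : a ≠ b) :
    ∃! p : (ℕ → ℕ) × (ℕ → ℕ),
      IsRunDecomp p.1 (fun k => if k % 2 = 0 then a else b) p.1 ∧
      IsRunDecomp p.2 (fun k => if k % 2 = 0 then b else a) p.2 ∧
      p.1 ≠ p.2 ∧
      {w : ℕ → ℕ | (∀ i, w i = a ∨ w i = b) ∧ IsDelta w w} = {p.1, p.2} := by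
  set αA : ℕ → ℕ := fun k => if k % 2 = 0 then a else b with hαA
  set αB : ℕ → ℕ := fun k => if k % 2 = 0 then b else a with hαB
  have hA1 : ∀ k, 1 ≤ αA k := by intro k; simp only [hαA]; split <;> omega
  have hB1 : ∀ k, 1 ≤ αB k := by intro k; simp only [hαB]; split <;> omega
  have hAalt : ∀ k, αA k ≠ αA (k + 1) := by
    intro k
    rcases Nat.mod_two_eq_zero_or_one k with h | h
    · have h1 : (k + 1) % 2 = 1 := by omega
      simp [hαA, h, h1, hab]
    · have h1 : (k + 1) % 2 = 0 := by omega
      simp [hαA, h, h1, Ne.symm hab]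
  have hBalt : ∀ k, αB k ≠ αB (k + 1) := by
    intro k
    rcases Nat.mod_two_eq_zero_or_one k with h | h
    · have h1 : (k + 1) % 2 = 1 := by omega
      simp [hαB, h, h1, Ne.symm hab]
    · have h1 : (k + 1) % 2 = 0 := by omega
      simp [hαB, h, h1, hab]
  have dA : IsRunDecomp (kw αA) αA (kw αA) := kw_decomp hA1 hAalt
  have dB : IsRunDecomp (kw αB) αB (kw αB) := kw_decomp hB1 hBalt
  have hmemA : ∀ i, kw αA i = a ∨ kw αA i = b := by
    intro i
    rw [kw_def]
    simp only [hαA]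
    split
    · exact Or.inl rfl
    · exact Or.inr rfl
  have hmemB : ∀ i, kw αB i = a ∨ kw αB i = b := by
    intro i
    rw [kw_def]
    simp only [hαB]
    split
    · exact Or.inr rfl
    · exact Or.inl rfl
  have hne : kw αA ≠ kw αB := by
    intro h
    apply hab
    have h1 : kw αA 0 = a := by rw [first_letter dA]; simp [hαA]
    have h2 : kw αB 0 = b := by rw [first_letter dB]; simp [hαB]
    rw [← h1, ← h2, h]
  refine ⟨(kw αA, kw αB), ⟨dA, dB, hne, ?_⟩, ?_⟩
  · ext w
    simp only [Set.mem_setOf_eq, Set.mem_insert_iff, Set.mem_singleton_iff]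
    constructor
    · rintro ⟨hmem, α', hdec⟩
      have hα'mem : ∀ k, α' k = a ∨ α' k = b := by
        intro k
        rw [alpha_val hdec k]
        exact hmem _
      rcases alt_form hab hα'mem hdec.2.1 with hA | hB
      · left
        have hαeq : α' = αA := funext hA
        rw [hαeq] at hdec
        exact decomp_unique hdec dA
      · right
        have hαeq : α' = αB := funext hB
        rw [hαeq] at hdec
        exact decomp_unique hdec dB
    · rintro (rfl | rfl)
      · exact ⟨hmemA, αA, dA⟩
      · exact ⟨hmemB, αB, dB⟩
  · rintro ⟨q1, q2⟩ ⟨h1, h2, -, -⟩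
    have e1 : q1 = kw αA := decomp_unique h1 dA
    have e2 : q2 = kw αB := decomp_unique h2 dB
    simp [Prod.ext_iff, e1, e2]
end

section
/- Let Σₙ be an alphabet of n positive integers. An infinite word y over Σₙ is a fixed point of the run-length operator Δ if and only if y = K_u for some infinite word u = u₁u₂u₃⋯ over Σₙ with u_i ≠ u_{i+1} for all i, where K_u = u₁^{u₁} u₂^{u₁} ⋯ u_{u₁}^{u₁} u_{u₁+1}^{u₂} ⋯, i.e. the word whose run base sequence is u and whose j-th run, for j in the block determined by u, has length equal to the corresponding letter of u as dictated by Δ(K_u) = K_u. -/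
open Finset

section CausalFixedPoint

variable {α : Type*} [Nonempty α]

noncomputable def causalFix (F : (ℕ → α) → ℕ → α) : ℕ → α
  | i => F (fun j => if j < i then causalFix F j else Classical.arbitrary α) i

theorem existsUnique_causal_fixedPoint (F : (ℕ → α) → ℕ → α)
    (hF : ∀ f g i, (∀ j < i, f j = g j) → F f i = F g i) :
    ∃! w : ℕ → α, ∀ i, w i = F w i := by
  refine ⟨causalFix F, fun i => ?_, fun w hw => funext fun i => ?_⟩
  · rw [causalFix]
    exact hF _ _ _ fun j hj => if_pos hj
  · induction i using Nat.strong_induction_on with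
    | _ i ih =>
      rw [hw, causalFix]
      exact hF _ _ _ fun j hj => by rw [if_pos hj, ih j hj]

end CausalFixedPoint

section RunIndex

variable {t t' : ℕ → ℕ}

theorem partialSum_congr {n : ℕ} (h : ∀ j < n, t j = t' j) :
    partialSum t n = partialSum t' n := by
  induction n with
  | zero => rfl
  | succ n ih =>
    simp only [partialSum]
    rw [ih fun j hj => h j (by omega), h n (by omega)]

theorem partialSum_strictMono (ht : ∀ k, 1 ≤ t k) : StrictMono (partialSum t) :=
  strictMono_nat_of_lt_succ fun k => Nat.lt_add_of_pos_right (ht k)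

theorem exists_partialSum_le_lt (ht : ∀ k, 1 ≤ t k) (i : ℕ) :
    ∃ k, partialSum t k ≤ i ∧ i < partialSum t (k + 1) := by
  induction i with
  | zero => exact ⟨0, le_rfl, Nat.lt_add_of_pos_right (ht 0)⟩
  | succ i ih =>
    obtain ⟨k, h1, h2⟩ := ih
    by_cases h : i + 1 < partialSum t (k + 1)
    · exact ⟨k, by omega, h⟩
    · exact ⟨k + 1, by omega, by have := ht (k + 1); simp only [partialSum] at *; omega⟩

/-- The index of the run containing position `i`, when `t` lists the run lengths. Only the runs
ending at or before `i` are counted, so the value depends on `t 0, …, t (i - 1)` alone. -/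
def runIndex (t : ℕ → ℕ) (i : ℕ) : ℕ :=
  #{k ∈ range i | partialSum t (k + 1) ≤ i}

theorem runIndex_congr {i : ℕ} (h : ∀ j < i, t j = t' j) : runIndex t i = runIndex t' i := by
  refine congrArg card (filter_congr fun k hk => ?_)
  rw [partialSum_congr fun j hj => h j (by simp at hk; omega)]

theorem runIndex_eq (ht : ∀ k, 1 ≤ t k) {k i : ℕ} (h1 : partialSum t k ≤ i)
    (h2 : i < partialSum t (k + 1)) : runIndex t i = k := by
  have hmono := partialSum_strictMono ht
  have hk : k ≤ i := (hmono.id_le k).trans h1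
  suffices {m ∈ range i | partialSum t (m + 1) ≤ i} = range k by
    rw [runIndex, this, card_range]
  ext m
  simp only [mem_filter, mem_range]
  constructor
  · rintro ⟨-, hm⟩
    exact Nat.succ_lt_succ_iff.mp (hmono.lt_iff_lt.mp (hm.trans_lt h2))
  · intro hm
    exact ⟨by omega, (hmono.monotone hm).trans h1⟩

end RunIndex

theorem IsRunDecomp.apply_partialSum {w α t : ℕ → ℕ} (h : IsRunDecomp w α t) (k : ℕ) :
    w (partialSum t k) = α k :=
  h.2.2 k _ le_rfl (Nat.lt_add_of_pos_right (h.1 k))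

theorem isRunDecomp_self_iff {w u : ℕ → ℕ} (hu : ∀ k, 1 ≤ u k)
    (hne : ∀ k, u k ≠ u (k + 1)) :
    IsRunDecomp w u w ↔ ∀ i, w i = u (runIndex w i) := by
  constructor
  · intro h i
    obtain ⟨k, h1, h2⟩ := exists_partialSum_le_lt h.1 i
    rw [runIndex_eq h.1 h1 h2]
    exact h.2.2 k i h1 h2
  · intro h
    have hw : ∀ i, 1 ≤ w i := fun i => h i ▸ hu _
    exact ⟨hw, hne, fun k i h1 h2 => by rw [h i, runIndex_eq hw h1 h2]⟩

theorem existsUnique_isRunDecomp_self {u : ℕ → ℕ} (hu : ∀ k, 1 ≤ u k)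
    (hne : ∀ k, u k ≠ u (k + 1)) : ∃! w : ℕ → ℕ, IsRunDecomp w u w := by
  rw [existsUnique_congr fun w => isRunDecomp_self_iff hu hne]
  exact existsUnique_causal_fixedPoint (fun w i => u (runIndex w i))
    fun _ _ _ h => congrArg u (runIndex_congr h)

/-- Over an alphabet `S` of positive integers: for each `u ∈ 𝔅ₙ` (no two
consecutive letters equal) there is a unique word `K_u` whose run base
sequence is `u` and which equals its own run-length sequence; and an infinite
word `w` over `S` is a fixed point of Δ iff `w = K_u` for some such `u`. -/
theorem stmt9 (S : Finset ℕ) (hpos : ∀ x ∈ S, 0 < x) :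
    (∀ u : ℕ → ℕ, (∀ i, u i ∈ S) → (∀ i, u i ≠ u (i + 1)) →
      ∃! w : ℕ → ℕ, IsRunDecomp w u w) ∧
    (∀ w : ℕ → ℕ, (∀ i, w i ∈ S) →
      (IsDelta w w ↔
        ∃ u : ℕ → ℕ, (∀ i, u i ∈ S) ∧ (∀ i, u i ≠ u (i + 1)) ∧
          IsRunDecomp w u w)) := by
  refine ⟨fun u hu hne => existsUnique_isRunDecomp_self (fun k => hpos _ (hu k)) hne,
    fun w hw => ⟨?_, fun ⟨u, _, _, h⟩ => ⟨u, h⟩⟩⟩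
  rintro ⟨α, h⟩
  exact ⟨α, fun k => h.apply_partialSum k ▸ hw _, h.2.1, h⟩
end

section
/- Let Σ₂ = {2m, 2n} with m, n positive integers, and let K be the generalized Kolakoski word over Σ₂ starting with 2m (run bases alternating 2m, 2n, and Δ(K) = K). Then K is a product of the two blocks A = (2m)(2m) and B = (2n)(2n), and writing it this way, K is the fixed point of the primitive substitution σ: A ↦ AᵐBᵐ, B ↦ AⁿBⁿ, i.e. K = lim σ^k(A); consequently K is uniformly recurrent. -/
/-- `u` is a fixed point of the substitution `s`, i.e.
`u = s(u 0) s(u 1) s(u 2) ⋯`. -/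
def SubstFix (s : ℕ → List ℕ) (u : ℕ → ℕ) : Prop :=
  ∀ i k, k < (s (u i)).length →
    u (partialSum (fun j => (s (u j)).length) i + k) = (s (u i)).getD k 0

/-- The finite word `f` occurs in `w` at position `p`. -/
def factorAt (w : ℕ → ℕ) (p : ℕ) (f : List ℕ) : Prop :=
  (List.range f.length).map (fun j => w (p + j)) = f

/-- `w` is uniformly recurrent: every factor occurs with bounded gaps. -/
def UniformlyRecurrent (w : ℕ → ℕ) : Prop :=
  ∀ f : List ℕ, (∃ p, factorAt w p f) →
    ∃ N, ∀ p, ∃ q, p ≤ q ∧ q ≤ p + N ∧ factorAt w q f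

lemma partialSum_succ (t : ℕ → ℕ) (k : ℕ) :
    partialSum t (k + 1) = partialSum t k + t k := rfl

lemma exists_run (t : ℕ → ℕ) (ht : ∀ k, 1 ≤ t k) (i : ℕ) :
    ∃ k, partialSum t k ≤ i ∧ i < partialSum t (k + 1) := by
  induction i with
  | zero =>
    have h0 : partialSum t 0 = 0 := rfl
    have h1 : partialSum t (0 + 1) = partialSum t 0 + t 0 := rfl
    have := ht 0
    exact ⟨0, by omega, by omega⟩
  | succ i ih =>
    obtain ⟨k, h1, h2⟩ := ih
    by_cases h : i + 1 < partialSum t (k + 1)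
    · exact ⟨k, by omega, h⟩
    · have h3 : partialSum t (k + 1 + 1) = partialSum t (k + 1) + t (k + 1) := rfl
      have := ht (k + 1)
      exact ⟨k + 1, by omega, by omega⟩

lemma factorAt_iff (w : ℕ → ℕ) (p : ℕ) (f : List ℕ) :
    factorAt w p f ↔ ∀ j, j < f.length → w (p + j) = f.getD j 0 := by
  constructor
  · intro h j hj
    have h' : (List.range f.length).map (fun j => w (p + j)) = f := h
    conv_rhs => rw [← h']
    rw [List.getD_eq_getElem _ 0 (by simpa using hj), List.getElem_map, List.getElem_range]
  · intro h
    apply List.ext_getElem (by simp)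
    intro j h1 h2
    rw [List.getElem_map, List.getElem_range, h j h2, List.getD_eq_getElem _ 0 h2]

lemma factorAt_nil (w : ℕ → ℕ) (p : ℕ) : factorAt w p [] := rfl

lemma chunk_len (s : ℕ → List ℕ) (B : ℕ → ℕ) :
    ∀ (l : List ℕ) (q : ℕ), (∀ r, r < l.length → l.getD r 0 = B (q + r)) →
      partialSum (fun j => (s (B j)).length) (q + l.length)
        = partialSum (fun j => (s (B j)).length) q + (l.flatMap s).length := by
  intro l
  induction l with
  | nil => intro q _; simp
  | cons x tl ih =>
    intro q hq
    have hx : x = B q := by simpa using hq 0 (by simp)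
    have h1 : q + (x :: tl).length = (q + 1) + tl.length := by
      simp [List.length_cons]; omega
    rw [h1, ih (q + 1) (fun r hr => by
      have := hq (r + 1) (by simpa using Nat.succ_lt_succ hr)
      simpa [Nat.add_assoc, Nat.add_comm 1 r] using this)]
    have h2 : partialSum (fun j => (s (B j)).length) (q + 1)
        = partialSum (fun j => (s (B j)).length) q + (s (B q)).length := rfl
    rw [h2]
    simp [hx]
    omega

lemma chunk_get (s : ℕ → List ℕ) (B : ℕ → ℕ) (hs : SubstFix s B) :
    ∀ (l : List ℕ) (q k : ℕ),
      (∀ r, r < l.length → l.getD r 0 = B (q + r)) →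
      k < (l.flatMap s).length →
      B (partialSum (fun j => (s (B j)).length) q + k) = (l.flatMap s).getD k 0 := by
  intro l
  induction l with
  | nil => intro q k _ hk; simp at hk
  | cons x tl ih =>
    intro q k hq hk
    have hx : x = B q := by simpa using hq 0 (by simp)
    have hfm : (x :: tl).flatMap s = s x ++ tl.flatMap s := by simp
    by_cases h : k < (s x).length
    · rw [hfm, List.getD_append _ _ _ _ h]
      have := hs q k (by rw [← hx]; exact h)
      rw [this, hx]
    · push_neg at h
      rw [hfm, List.getD_append_right _ _ _ _ h]
      have h2 : partialSum (fun j => (s (B j)).length) (q + 1)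
          = partialSum (fun j => (s (B j)).length) q + (s (B q)).length := rfl
      rw [← hx] at h2
      have hQ : partialSum (fun j => (s (B j)).length) q + k
          = partialSum (fun j => (s (B j)).length) (q + 1) + (k - (s x).length) := by omega
      rw [hfm, List.length_append] at hk
      rw [hQ]
      exact ih (q + 1) (k - (s x).length)
        (fun r hr => by
          have := hq (r + 1) (by simpa using Nat.succ_lt_succ hr)
          simpa [Nat.add_assoc, Nat.add_comm 1 r] using this)
        (by omega)

lemma substFix_comp (σ' s : ℕ → List ℕ) (B : ℕ → ℕ)
    (hσ : SubstFix σ' B) (hs : SubstFix s B) :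
    SubstFix (fun x => (σ' x).flatMap s) B := by
  have hQ : ∀ i, partialSum (fun j => ((σ' (B j)).flatMap s).length) i
      = partialSum (fun j => (s (B j)).length)
          (partialSum (fun j => (σ' (B j)).length) i) := by
    intro i
    induction i with
    | zero => rfl
    | succ i ih =>
      have h1 : partialSum (fun j => ((σ' (B j)).flatMap s).length) (i + 1)
          = partialSum (fun j => ((σ' (B j)).flatMap s).length) i
            + ((σ' (B i)).flatMap s).length := rfl
      have h2 : partialSum (fun j => (σ' (B j)).length) (i + 1)
          = partialSum (fun j => (σ' (B j)).length) i + (σ' (B i)).length := rfl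
      rw [h1, ih, h2, chunk_len s B (σ' (B i)) _ (fun r hr => (hσ i r hr).symm)]
  intro i k hk
  show B (partialSum (fun j => ((σ' (B j)).flatMap s).length) i + k)
      = ((σ' (B i)).flatMap s).getD k 0
  rw [hQ i]
  exact chunk_get s B hs (σ' (B i)) _ k (fun r hr => (hσ i r hr).symm) hk

def kSub (m n : ℕ) : ℕ → List ℕ := fun x =>
  if x = 2 * m then List.replicate m (2 * m) ++ List.replicate m (2 * n)
  else List.replicate n (2 * m) ++ List.replicate n (2 * n)

def kIter (m n : ℕ) : ℕ → ℕ → List ℕ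
  | 0, x => [x]
  | k + 1, x => (kSub m n x).flatMap (kIter m n k)

lemma kSub_length (m n x : ℕ) :
    (kSub m n x).length = if x = 2 * m then 2 * m else 2 * n := by
  unfold kSub
  split <;> simp <;> omega

lemma kSub_cons (m n : ℕ) (hm : 0 < m) (hn : 0 < n) (x : ℕ) :
    ∃ tl, kSub m n x = 2 * m :: tl := by
  unfold kSub
  split
  · obtain ⟨m', rfl⟩ := Nat.exists_eq_succ_of_ne_zero hm.ne'
    exact ⟨_, by rw [List.replicate_succ]; rfl⟩
  · obtain ⟨n', rfl⟩ := Nat.exists_eq_succ_of_ne_zero hn.ne'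
    exact ⟨_, by rw [List.replicate_succ]; rfl⟩

lemma substFix_id (B : ℕ → ℕ) : SubstFix (fun x => [x]) B := by
  have hps : ∀ i, partialSum (fun j => ([B j]).length) i = i := by
    intro i
    induction i with
    | zero => rfl
    | succ i ih =>
      have : partialSum (fun j => ([B j]).length) (i + 1)
          = partialSum (fun j => ([B j]).length) i + 1 := rfl
      omega
  intro i k hk
  simp only [List.length_singleton] at hk
  interval_cases k
  show B (partialSum (fun j => ([B j]).length) i + 0) = _
  rw [hps i]
  rfl

lemma substFix_kIter (m n : ℕ) (B : ℕ → ℕ) (hσ : SubstFix (kSub m n) B) :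
    ∀ k, SubstFix (kIter m n k) B := by
  intro k
  induction k with
  | zero =>
    intro i k hk
    simp only [kIter] at hk ⊢
    exact substFix_id B i k hk
  | succ k ih =>
    intro i k' hk
    simp only [kIter] at hk ⊢
    exact substFix_comp (kSub m n) (kIter m n k) B hσ ih i k' hk

lemma kIter_prefix (m n : ℕ) (hm : 0 < m) (hn : 0 < n) (k x : ℕ) :
    kIter m n k (2 * m) <+: kIter m n (k + 1) x := by
  obtain ⟨tl, htl⟩ := kSub_cons m n hm hn x
  show kIter m n k (2 * m) <+: (kSub m n x).flatMap (kIter m n k)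
  rw [htl]
  exact ⟨tl.flatMap (kIter m n k), by simp⟩

lemma len_flatMap_le (g : ℕ → List ℕ) (c : ℕ) (h : ∀ y, (g y).length ≤ c) :
    ∀ l : List ℕ, (l.flatMap g).length ≤ l.length * c := by
  intro l
  induction l with
  | nil => simp
  | cons x tl ih =>
    have hstep : ((x :: tl).flatMap g).length = (g x).length + (tl.flatMap g).length := by
      simp
    rw [hstep, List.length_cons, Nat.succ_mul]
    have := h x
    omega

lemma le_len_flatMap (g : ℕ → List ℕ) (c : ℕ) (h : ∀ y, c ≤ (g y).length) :
    ∀ l : List ℕ, l.length * c ≤ (l.flatMap g).length := by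
  intro l
  induction l with
  | nil => simp
  | cons x tl ih =>
    have hstep : ((x :: tl).flatMap g).length = (g x).length + (tl.flatMap g).length := by
      simp
    rw [hstep, List.length_cons, Nat.succ_mul]
    have := h x
    omega

lemma kIter_len_lower (m n : ℕ) (hm : 0 < m) (hn : 0 < n) :
    ∀ k x, 2 ^ k ≤ (kIter m n k x).length := by
  intro k
  induction k with
  | zero => intro x; simp [kIter]
  | succ k ih =>
    intro x
    have h2 : 2 ≤ (kSub m n x).length := by
      rw [kSub_length]; split <;> omega
    have h1 := le_len_flatMap (kIter m n k) (2 ^ k) ih (kSub m n x)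
    show 2 ^ (k + 1) ≤ ((kSub m n x).flatMap (kIter m n k)).length
    calc 2 ^ (k + 1) = 2 * 2 ^ k := by ring
      _ ≤ (kSub m n x).length * 2 ^ k := Nat.mul_le_mul_right _ h2
      _ ≤ _ := h1

lemma kIter_len_upper (m n : ℕ) :
    ∀ k x, (kIter m n k x).length ≤ (2 * m + 2 * n) ^ k := by
  intro k
  induction k with
  | zero => intro x; simp [kIter]
  | succ k ih =>
    intro x
    have h2 : (kSub m n x).length ≤ 2 * m + 2 * n := by
      rw [kSub_length]; split <;> omega
    have h1 := len_flatMap_le (kIter m n k) ((2 * m + 2 * n) ^ k) ih (kSub m n x)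
    show ((kSub m n x).flatMap (kIter m n k)).length ≤ (2 * m + 2 * n) ^ (k + 1)
    calc ((kSub m n x).flatMap (kIter m n k)).length
        ≤ (kSub m n x).length * (2 * m + 2 * n) ^ k := h1
      _ ≤ (2 * m + 2 * n) * (2 * m + 2 * n) ^ k :=
          Nat.mul_le_mul_right _ h2
      _ = (2 * m + 2 * n) ^ (k + 1) := by ring

lemma aux_URB (m n : ℕ) (hm : 0 < m) (hn : 0 < n) (B : ℕ → ℕ)
    (hSF : SubstFix (kSub m n) B) (hB0 : B 0 = 2 * m) :
    UniformlyRecurrent B := by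
  intro f hf
  rcases eq_or_ne f [] with rfl | hfne
  · exact ⟨0, fun p => ⟨p, le_refl _, by omega, factorAt_nil B p⟩⟩
  obtain ⟨p, hp⟩ := hf
  have hp' := (factorAt_iff B p f).1 hp
  set k0 := p + f.length with hk0
  have hcap : p + f.length ≤ (kIter m n k0 (2 * m)).length :=
    le_trans (le_of_lt (Nat.lt_two_pow_self (n := k0))) (kIter_len_lower m n hm hn k0 (2 * m))
  set M := (2 * m + 2 * n) ^ (k0 + 1) with hM
  refine ⟨M + p, ?_⟩
  intro p'
  have ht1 : ∀ j, 1 ≤ (kIter m n (k0 + 1) (B j)).length := fun j =>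
    le_trans (Nat.one_le_two_pow) (kIter_len_lower m n hm hn (k0 + 1) (B j))
  obtain ⟨l, hl1, hl2⟩ :=
    exists_run (fun j => (kIter m n (k0 + 1) (B j)).length) ht1 p'
  have hstep : partialSum (fun j => (kIter m n (k0 + 1) (B j)).length) (l + 1)
      = partialSum (fun j => (kIter m n (k0 + 1) (B j)).length) l
        + (kIter m n (k0 + 1) (B l)).length := rfl
  have hMl : (kIter m n (k0 + 1) (B l)).length ≤ M := kIter_len_upper m n (k0 + 1) (B l)
  refine ⟨partialSum (fun j => (kIter m n (k0 + 1) (B j)).length) (l + 1) + p,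
    by omega, by omega, ?_⟩
  rw [factorAt_iff]
  intro j hj
  have hSFk := substFix_kIter m n B hSF (k0 + 1)
  have hSFk0 := substFix_kIter m n B hSF k0
  have hpref := kIter_prefix m n hm hn k0 (B (l + 1))
  have hjlt : p + j < (kIter m n k0 (2 * m)).length := by omega
  have hjlt2 : p + j < (kIter m n (k0 + 1) (B (l + 1))).length :=
    lt_of_lt_of_le hjlt hpref.length_le
  have e1 := hSFk (l + 1) (p + j) hjlt2
  have e2 : (kIter m n (k0 + 1) (B (l + 1))).getD (p + j) 0
      = (kIter m n k0 (2 * m)).getD (p + j) 0 := by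
    rw [List.getD_eq_getElem _ _ hjlt2, List.getD_eq_getElem _ _ hjlt]
    exact (hpref.getElem hjlt).symm
  have e3 := hSFk0 0 (p + j) (by rw [hB0]; exact hjlt)
  rw [hB0] at e3
  have e4 : partialSum (fun j => (kIter m n k0 (B j)).length) 0 + (p + j) = p + j := by
    have : partialSum (fun j => (kIter m n k0 (B j)).length) 0 = 0 := rfl
    omega
  rw [e4] at e3
  rw [show partialSum (fun j => (kIter m n (k0 + 1) (B j)).length) (l + 1) + p + j
      = partialSum (fun j => (kIter m n (k0 + 1) (B j)).length) (l + 1) + (p + j) by omega,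
    e1, e2, ← e3]
  exact hp' j hj

lemma aux_URK (K B : ℕ → ℕ) (hBdef : ∀ i, K (2 * i) = B i ∧ K (2 * i + 1) = B i)
    (hURB : UniformlyRecurrent B) : UniformlyRecurrent K := by
  intro f hf
  rcases eq_or_ne f [] with rfl | hfne
  · exact ⟨0, fun p => ⟨p, le_refl _, by omega, factorAt_nil K p⟩⟩
  obtain ⟨p0, hp0⟩ := hf
  have hp0' := (factorAt_iff K p0 f).1 hp0
  obtain ⟨q0, r, hr, hp0eq⟩ : ∃ q0 r, r < 2 ∧ p0 = 2 * q0 + r :=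
    ⟨p0 / 2, p0 % 2, by omega, by omega⟩
  set g := (List.range (f.length + 1)).map (fun j => B (q0 + j)) with hg
  have hglen : g.length = f.length + 1 := by simp [hg]
  have hgocc : factorAt B q0 g := by
    unfold factorAt
    rw [hglen]
  obtain ⟨N, hN⟩ := hURB g ⟨q0, hgocc⟩
  refine ⟨2 * N + 2, ?_⟩
  intro p'
  obtain ⟨q', hq1, hq2, hq3⟩ := hN ((p' + 1) / 2)
  have hq3' := (factorAt_iff B q' g).1 hq3
  refine ⟨2 * q' + r, by omega, by omega, ?_⟩
  rw [factorAt_iff]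
  intro j hj
  have hd : ∀ x d e : ℕ, e < 2 → K (2 * x + (2 * d + e)) = B (x + d) := by
    intro x d e he
    interval_cases e
    · rw [show 2 * x + (2 * d + 0) = 2 * (x + d) by ring]
      exact (hBdef (x + d)).1
    · rw [show 2 * x + (2 * d + 1) = 2 * (x + d) + 1 by ring]
      exact (hBdef (x + d)).2
  obtain ⟨d, e, hde, he⟩ : ∃ d e, r + j = 2 * d + e ∧ e < 2 :=
    ⟨(r + j) / 2, (r + j) % 2, by omega, by omega⟩
  have hdlt : d < f.length + 1 := by omega
  have e1 : K (2 * q' + r + j) = B (q' + d) := by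
    rw [show 2 * q' + r + j = 2 * q' + (2 * d + e) by omega]
    exact hd q' d e he
  have e2 : K (p0 + j) = B (q0 + d) := by
    rw [show p0 + j = 2 * q0 + (2 * d + e) by omega]
    exact hd q0 d e he
  have e3 : B (q' + d) = g.getD d 0 := hq3' d (by omega)
  have e4 : g.getD d 0 = B (q0 + d) := by
    rw [List.getD_eq_getElem _ _ (by omega : d < g.length)]
    simp [hg]
  rw [e1, e3, e4, ← e2]
  exact hp0' j hj

lemma aux_main (m n : ℕ) (hm : 0 < m) (hn : 0 < n) (hmn : m ≠ n) (K B : ℕ → ℕ)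
    (hBdef : ∀ i, B i = K (2 * i))
    (hfix : IsRunDecomp K (fun k => if k % 2 = 0 then 2 * m else 2 * n) K) :
    (∀ i, K (2 * i + 1) = K (2 * i)) ∧ SubstFix (kSub m n) B ∧ B 0 = 2 * m := by
  obtain ⟨ht, hne, hrun⟩ := hfix
  have hab : 2 * m ≠ 2 * n := by omega
  have hKmem : ∀ i, K i = 2 * m ∨ K i = 2 * n := by
    intro i
    obtain ⟨k, h1, h2⟩ := exists_run K ht i
    have h3 := hrun k i h1 h2
    by_cases hk : k % 2 = 0
    · left; rw [h3]; simp [hk]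
    · right; rw [h3]; simp [hk]
  have hKeven : ∀ i, K i % 2 = 0 := fun i => by rcases hKmem i with h | h <;> omega
  have hPeven : ∀ k, partialSum K k % 2 = 0 := by
    intro k
    induction k with
    | zero => rfl
    | succ k ih =>
      have h1 : partialSum K (k + 1) = partialSum K k + K k := rfl
      have := hKeven k
      omega
  have hpair : ∀ i, K (2 * i + 1) = K (2 * i) := by
    intro i
    obtain ⟨k, h1, h2⟩ := exists_run K ht (2 * i)
    have e1 := hrun k (2 * i) h1 h2
    have h3 : 2 * i + 1 < partialSum K (k + 1) := by
      have := hPeven (k + 1)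
      omega
    have e2 := hrun k (2 * i + 1) (by omega) h3
    rw [e1, e2]
  have hB0 : B 0 = 2 * m := by
    have h1 : partialSum K 0 = 0 := rfl
    have h2 : partialSum K (0 + 1) = partialSum K 0 + K 0 := rfl
    have h3 := ht 0
    have e := hrun 0 0 (by omega) (by omega)
    rw [hBdef 0, show 2 * 0 = 0 by omega, e]
    simp
  have hBmem : ∀ i, B i = 2 * m ∨ B i = 2 * n := fun i => (hBdef i) ▸ hKmem (2 * i)
  have hσlen : ∀ i, (kSub m n (B i)).length = B i := by
    intro i
    rcases hBmem i with h | h <;> rw [kSub_length] <;> split <;> omega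
  have hQB : ∀ i, 2 * partialSum (fun j => (kSub m n (B j)).length) i
      = partialSum K (2 * i) := by
    intro i
    induction i with
    | zero => rfl
    | succ i ih =>
      have h1 : partialSum (fun j => (kSub m n (B j)).length) (i + 1)
          = partialSum (fun j => (kSub m n (B j)).length) i + (kSub m n (B i)).length := rfl
      have h2 : partialSum K (2 * (i + 1)) = partialSum K (2 * i) + K (2 * i) + K (2 * i + 1) := by
      -- 2*(i+1) = 2*i+1+1
        rw [show 2 * (i + 1) = (2 * i + 1) + 1 by ring]
        have ha : partialSum K ((2 * i + 1) + 1) = partialSum K (2 * i + 1) + K (2 * i + 1) := rfl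
        have hb : partialSum K (2 * i + 1) = partialSum K (2 * i) + K (2 * i) := rfl
        omega
      rw [h1, h2, Nat.mul_add, ih, hσlen i, hpair i, hBdef i]
      omega
  refine ⟨hpair, ?_, hB0⟩
  intro i k hk
  rw [hσlen i] at hk
  obtain ⟨c, hc1, hc2, hc3⟩ : ∃ c, B i = 2 * c
      ∧ kSub m n (B i) = List.replicate c (2 * m) ++ List.replicate c (2 * n) ∧ 0 < c := by
    rcases hBmem i with h | h
    · exact ⟨m, h, by rw [h]; unfold kSub; rw [if_pos rfl], hm⟩
    · exact ⟨n, h, by rw [h]; unfold kSub; rw [if_neg (by omega)], hn⟩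
  rw [hc2]
  have hget : (List.replicate c (2 * m) ++ List.replicate c (2 * n)).getD k 0
      = if k < c then 2 * m else 2 * n := by
    split
    · next h =>
      rw [List.getD_append _ _ _ _ (by simpa using h),
        List.getD_eq_getElem _ _ (by simpa using h), List.getElem_replicate]
    · next h =>
      push_neg at h
      have hkc : k - c < c := by omega
      rw [List.getD_append_right _ _ _ _ (by simpa using h),
        List.length_replicate,
        List.getD_eq_getElem _ _ (by simpa using hkc), List.getElem_replicate]
  rw [hget]
  have hpos : B (partialSum (fun j => (kSub m n (B j)).length) i + k)
      = K (partialSum K (2 * i) + 2 * k) := by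
    rw [hBdef, Nat.mul_add, hQB i]
  rw [hpos]
  have hK2i : K (2 * i) = 2 * c := by rw [← hBdef i]; exact hc1
  have hK2i1 : K (2 * i + 1) = 2 * c := by rw [hpair i]; exact hK2i
  have hP1 : partialSum K (2 * i + 1) = partialSum K (2 * i) + K (2 * i) := rfl
  have hP2 : partialSum K ((2 * i + 1) + 1) = partialSum K (2 * i + 1) + K (2 * i + 1) := rfl
  split
  · next hkc =>
    have e := hrun (2 * i) (partialSum K (2 * i) + 2 * k) (by omega) (by omega)
    rw [e]
    simp [Nat.mul_mod_right]
  · next hkc =>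
    push_neg at hkc
    have e := hrun (2 * i + 1) (partialSum K (2 * i) + 2 * k) (by omega) (by omega)
    rw [e]
    have h1 : (2 * i + 1) % 2 = 1 := by omega
    simp [h1]

/-- Let `K` be the generalized Kolakoski word over `{2m, 2n}` starting with
`2m` (alternating run bases, `Δ(K) = K`). Reading `K` as a sequence of the
blocks `A = (2m)(2m)` and `B = (2n)(2n)` yields a sequence `B'` that is the
fixed point of the (primitive) substitution `A ↦ AᵐBᵐ, B ↦ AⁿBⁿ`;
consequently `K` is uniformly recurrent. -/
theorem stmt18 (m n : ℕ) (hm : 0 < m) (hn : 0 < n) (hmn : m ≠ n)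
    (K : ℕ → ℕ)
    (hfix : IsRunDecomp K (fun k => if k % 2 = 0 then 2 * m else 2 * n) K) :
    (∃ B : ℕ → ℕ, (∀ i, K (2 * i) = B i ∧ K (2 * i + 1) = B i) ∧
      SubstFix (fun x =>
        if x = 2 * m then
          List.replicate m (2 * m) ++ List.replicate m (2 * n)
        else
          List.replicate n (2 * m) ++ List.replicate n (2 * n)) B) ∧
    UniformlyRecurrent K := by
  have hpack := aux_main m n hm hn hmn K (fun i => K (2 * i)) (fun i => rfl) hfix
  obtain ⟨hpair, hSF, hB0⟩ := hpack
  have hBdef : ∀ i, K (2 * i) = (fun i => K (2 * i)) i ∧ K (2 * i + 1) = (fun i => K (2 * i)) i :=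
    fun i => ⟨rfl, hpair i⟩
  have hURB := aux_URB m n hm hn (fun i => K (2 * i)) hSF hB0
  have hURK := aux_URK K (fun i => K (2 * i)) hBdef hURB
  exact ⟨⟨fun i => K (2 * i), hBdef, hSF⟩, hURK⟩
end
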